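/- arXiv:1904.03361 — 3 statements merged into one kernel-verified Lean document; each statement's English description precedes it below -/
import Mathlib

section
/- Under the hypotheses of the nonhomogeneous solution lemma, the functions u, v defined by the explicit integral formulas satisfy the identity g(x)u(x) - f(x)v(x) = -∫_{x_0}^x ( f(s) h_1(s) + g(s) h_2(s) ) ds for all x in [a,b]. -/
open Set intervalIntegral MeasureTheory

/-!
With `K x = ∫_{x₀}^x (f h₁ + g h₂)`, the system gives `(f g)' = p₂ g² - p₁ f²` (the `q` terms
cancel), and hence `(-K / (f g))' = -h₂/f + p₂ K/f² - (h₁/g + p₁ K/g²)`, which is the difference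
of the integrands defining `u / f` and `v / g`. Integrating from `x₀`, where `K` vanishes, gives
`u / f - v / g = -K / (f g)`; multiplying by `f g` is the identity.
-/

section

variable {E : Type*} [NormedAddCommGroup E] [NormedSpace ℝ E] [CompleteSpace E]
  {F F' φ : ℝ → E} {a b x y : ℝ}

theorem integral_eq_sub_of_forall_hasDerivWithinAt_Icc
    (hF : ∀ t ∈ Icc a b, HasDerivWithinAt F (F' t) (Icc a b) t)
    (hx : x ∈ Icc a b) (hy : y ∈ Icc a b) (hint : IntervalIntegrable F' volume x y) :
    ∫ t in x..y, F' t = F y - F x := by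
  have hsub : uIcc x y ⊆ Icc a b := uIcc_subset_Icc hx hy
  refine integral_eq_sub_of_hasDeriv_right
    (fun t ht => (hF t (hsub ht)).continuousWithinAt.mono hsub) (fun t ht => ?_) hint
  have hIcc : Icc a b ∈ nhds t :=
    Icc_mem_nhds ((le_min hx.1 hy.1).trans_lt ht.1) (ht.2.trans_le (max_le hx.2 hy.2))
  exact ((hF t (mem_of_mem_nhds hIcc)).hasDerivAt hIcc).hasDerivWithinAt

theorem ContinuousOn.hasDerivWithinAt_integral_Icc (hφ : ContinuousOn φ (Icc a b))
    (hx : x ∈ Icc a b) (hy : y ∈ Icc a b) :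
    HasDerivWithinAt (fun t => ∫ s in x..t, φ s) (φ y) (Icc a b) y := by
  have : Fact (y ∈ Icc a b) := ⟨hy⟩
  exact integral_hasDerivWithinAt_right ((hφ.mono (uIcc_subset_Icc hx hy)).intervalIntegrable)
    (hφ.stronglyMeasurableAtFilter_nhdsWithin measurableSet_Icc y) (hφ y hy)

end

section

variable {p1 p2 q f g : ℝ → ℂ} {s : Set ℝ} {x : ℝ}

theorem hasDerivWithinAt_mul_of_dirac_system
    (hg : HasDerivWithinAt g (-(p1 x * f x) - q x * g x) s x)
    (hf : HasDerivWithinAt f (q x * f x + p2 x * g x) s x) :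
    HasDerivWithinAt (fun t => f t * g t) (p2 x * g x ^ 2 - p1 x * f x ^ 2) s x := by
  refine (hf.mul hg).congr_deriv ?_
  ring

theorem hasDerivWithinAt_neg_div_mul_of_dirac_system {h1 h2 K : ℝ → ℂ}
    (hK : HasDerivWithinAt K (f x * h1 x + g x * h2 x) s x)
    (hfg : HasDerivWithinAt (fun t => f t * g t) (p2 x * g x ^ 2 - p1 x * f x ^ 2) s x)
    (hf : f x ≠ 0) (hg : g x ≠ 0) :
    HasDerivWithinAt (fun t => -K t / (f t * g t))
      ((-(h2 x) / f x + p2 x / f x ^ 2 * K x) - (h1 x / g x + p1 x / g x ^ 2 * K x)) s x := by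
  refine (hK.neg.div hfg (mul_ne_zero hf hg)).congr_deriv ?_
  simp only [Pi.neg_apply]
  field_simp
  ring

end

theorem nonhom_dirac_wronskian_identity_general (a b x0 : ℝ) (hx0 : x0 ∈ Icc a b)
    (p1 p2 q h1 h2 f g : ℝ → ℂ)
    (hp1 : ContinuousOn p1 (Icc a b)) (hp2 : ContinuousOn p2 (Icc a b))
    (hh1 : ContinuousOn h1 (Icc a b)) (hh2 : ContinuousOn h2 (Icc a b))
    (hf : ∀ x ∈ Icc a b, f x ≠ 0) (hg : ∀ x ∈ Icc a b, g x ≠ 0)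
    (hsys : ∀ x ∈ Icc a b,
      HasDerivWithinAt g (-(p1 x * f x) - q x * g x) (Icc a b) x ∧
      HasDerivWithinAt f (q x * f x + p2 x * g x) (Icc a b) x)
    (u v : ℝ → ℂ)
    (hu : u = fun x => f x * ∫ t in x0..x,
      (-(h2 t) / f t + p2 t / f t ^ 2 * ∫ s in x0..t, (f s * h1 s + g s * h2 s)))
    (hv : v = fun x => g x * ∫ t in x0..x,
      (h1 t / g t + p1 t / g t ^ 2 * ∫ s in x0..t, (f s * h1 s + g s * h2 s))) :
    ∀ x ∈ Icc a b,
      g x * u x - f x * v x = -∫ s in x0..x, (f s * h1 s + g s * h2 s) := by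
  intro x hx
  have hfc : ContinuousOn f (Icc a b) := fun t ht => (hsys t ht).2.continuousWithinAt
  have hgc : ContinuousOn g (Icc a b) := fun t ht => (hsys t ht).1.continuousWithinAt
  set K : ℝ → ℂ := fun t => ∫ s in x0..t, (f s * h1 s + g s * h2 s)
  have hK : ∀ t ∈ Icc a b, HasDerivWithinAt K (f t * h1 t + g t * h2 t) (Icc a b) t :=
    fun t ht => ((hfc.mul hh1).add (hgc.mul hh2)).hasDerivWithinAt_integral_Icc hx0 ht
  have hKc : ContinuousOn K (Icc a b) := fun t ht => (hK t ht).continuousWithinAt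
  have hsub := uIcc_subset_Icc hx0 hx
  have hA : IntervalIntegrable (fun t => -(h2 t) / f t + p2 t / f t ^ 2 * K t) volume x0 x :=
    ((hh2.neg.div hfc hf).add ((hp2.div (hfc.pow 2) fun t ht => pow_ne_zero 2 (hf t ht)).mul
      hKc)).mono hsub |>.intervalIntegrable
  have hB : IntervalIntegrable (fun t => h1 t / g t + p1 t / g t ^ 2 * K t) volume x0 x :=
    ((hh1.div hgc hg).add ((hp1.div (hgc.pow 2) fun t ht => pow_ne_zero 2 (hg t ht)).mul
      hKc)).mono hsub |>.intervalIntegrable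
  have hFTC := integral_eq_sub_of_forall_hasDerivWithinAt_Icc (fun t ht =>
      hasDerivWithinAt_neg_div_mul_of_dirac_system (hK t ht)
        (hasDerivWithinAt_mul_of_dirac_system (hsys t ht).1 (hsys t ht).2) (hf t ht) (hg t ht))
    hx0 hx (hA.sub hB)
  rw [integral_sub hA hB] at hFTC
  simp only [hu, hv, K, integral_same, neg_zero, zero_div, sub_zero] at hFTC ⊢
  rw [eq_div_iff (mul_ne_zero (hf x hx) (hg x hx))] at hFTC
  linear_combination hFTC

/-- under the hypotheses of the nonhomogeneous solution lemma, the functions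
u, v defined by the explicit integral formulas satisfy
`g(x)u(x) - f(x)v(x) = -∫_{x₀}^x (f h₁ + g h₂) ds` for all x in [a,b]. -/
theorem nonhom_dirac_wronskian_identity (a b x0 : ℝ) (hx0 : x0 ∈ Icc a b)
    (p1 p2 q h1 h2 f g : ℝ → ℂ)
    (hp1 : ContinuousOn p1 (Icc a b)) (hp2 : ContinuousOn p2 (Icc a b))
    (hq : ContinuousOn q (Icc a b))
    (hh1 : ContinuousOn h1 (Icc a b)) (hh2 : ContinuousOn h2 (Icc a b))
    (hf : ∀ x ∈ Icc a b, f x ≠ 0) (hg : ∀ x ∈ Icc a b, g x ≠ 0)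
    (hsys : ∀ x ∈ Icc a b,
      HasDerivWithinAt g (-(p1 x * f x) - q x * g x) (Icc a b) x ∧
      HasDerivWithinAt f (q x * f x + p2 x * g x) (Icc a b) x)
    (u v : ℝ → ℂ)
    (hu : u = fun x => f x * ∫ t in x0..x,
      (-(h2 t) / f t + p2 t / f t ^ 2 * ∫ s in x0..t, (f s * h1 s + g s * h2 s)))
    (hv : v = fun x => g x * ∫ t in x0..x,
      (h1 t / g t + p1 t / g t ^ 2 * ∫ s in x0..t, (f s * h1 s + g s * h2 s))) :
    ∀ x ∈ Icc a b,
      g x * u x - f x * v x = -∫ s in x0..x, (f s * h1 s + g s * h2 s) :=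
  nonhom_dirac_wronskian_identity_general a b x0 hx0 p1 p2 q h1 h2 f g hp1 hp2 hh1 hh2 hf hg hsys u
    v hu hv
end

section
/- Let (f,g)^T be a non-vanishing solution of the homogeneous Dirac system and κ = f(x_0)g(x_0). Then the vector functions Y_1(x) = ( f(x)(1 - κ ∫_{x_0}^x p_2/f^2 ds), -κ g(x) ∫_{x_0}^x p_1/g^2 ds )^T and Y_2(x) = ( κ f(x) ∫_{x_0}^x p_2/f^2 ds, g(x)(1 + κ ∫_{x_0}^x p_1/g^2 ds) )^T are solutions of the homogeneous system B Y' + P Y = 0, and they are linearly independent; hence every solution is a complex linear combination c_1 Y_1 + c_2 Y_2. -/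
/-!
A non-vanishing solution `(f, g)` satisfies `((f g)⁻¹)' = p₁/g² - p₂/f²`, so
`κ / (f g) = 1 - κ ∫ p₂/f² + κ ∫ p₁/g²`. This identity is exactly what makes `Y₂` a solution,
and `Y₁ = (f, g) - Y₂` is then one as well. The Wronskian `W = y₁₁ y₂₂ - y₁₂ y₂₁` of two
solutions is constant; at `x₀` it equals `κ ≠ 0`, which gives independence, and Cramer's rule
with constant Wronskians expresses every solution in terms of `Y₁` and `Y₂`.
-/

open Set intervalIntegral MeasureTheory

/-- The componentwise form of `B Y' + P Y = 0` for `Y = (u, v)` on the set `s`. -/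
def IsDiracSolution (p1 p2 q : ℝ → ℂ) (s : Set ℝ) (u v : ℝ → ℂ) : Prop :=
  ∀ x ∈ s, HasDerivWithinAt v (-(p1 x * u x) - q x * v x) s x ∧
    HasDerivWithinAt u (q x * u x + p2 x * v x) s x

theorem Convex.eq_of_hasDerivWithinAt_zero {E : Type*} [NormedAddCommGroup E] [NormedSpace ℝ E]
    {s : Set ℝ} (hs : Convex ℝ s) {φ : ℝ → E} (hφ : ∀ x ∈ s, HasDerivWithinAt φ 0 s x)
    {x y : ℝ} (hx : x ∈ s) (hy : y ∈ s) : φ x = φ y := by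
  have h := hs.norm_image_sub_le_of_norm_hasDerivWithin_le (f' := fun _ => 0) (C := 0) hφ
    (fun _ _ => by simp) hy hx
  rwa [zero_mul, norm_le_zero_iff, sub_eq_zero] at h

theorem ContinuousOn.hasDerivWithinAt_integral_Icc_s3 {E : Type*} [NormedAddCommGroup E]
    [NormedSpace ℝ E] [CompleteSpace E] {a b x0 : ℝ} {F : ℝ → E}
    (hF : ContinuousOn F (Icc a b)) (hx0 : x0 ∈ Icc a b) ⦃x : ℝ⦄ (hx : x ∈ Icc a b) :
    HasDerivWithinAt (fun t => ∫ s in x0..t, F s) (F x) (Icc a b) x := by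
  have : Fact (x ∈ Icc a b) := ⟨hx⟩
  refine integral_hasDerivWithinAt_right (t := Icc a b)
    ((hF.mono (uIcc_subset_Icc hx0 hx)).intervalIntegrable) ?_ (hF x hx)
  exact AEStronglyMeasurable.stronglyMeasurableAtFilter_of_mem
    (hF.aestronglyMeasurable measurableSet_Icc) self_mem_nhdsWithin

theorem hasDerivWithinAt_integral_div_sq {a b x0 : ℝ} {p h : ℝ → ℂ}
    (hp : ContinuousOn p (Icc a b)) (hh : ContinuousOn h (Icc a b))
    (hh0 : ∀ x ∈ Icc a b, h x ≠ 0) (hx0 : x0 ∈ Icc a b) ⦃x : ℝ⦄ (hx : x ∈ Icc a b) :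
    HasDerivWithinAt (fun t => ∫ s in x0..t, p s / h s ^ 2) (p x / h x ^ 2) (Icc a b) x :=
  (hp.div (hh.pow 2) fun t ht => pow_ne_zero 2 (hh0 t ht)).hasDerivWithinAt_integral_Icc_s3 hx0 hx

theorem linearIndependent_pair_of_det_ne_zero {K α : Type*} [Field K] {Y Z : α → K × K} (x : α)
    (hdet : (Y x).1 * (Z x).2 - (Y x).2 * (Z x).1 ≠ 0) : LinearIndependent K ![Y, Z] := by
  rw [LinearIndependent.pair_iff]
  intro c d h
  have h1 : c * (Y x).1 + d * (Z x).1 = 0 := congrArg (fun w => (w x).1) h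
  have h2 : c * (Y x).2 + d * (Z x).2 = 0 := congrArg (fun w => (w x).2) h
  constructor
  · exact (mul_eq_zero.mp (by linear_combination (Z x).2 * h1 - (Z x).1 * h2)).resolve_right hdet
  · exact (mul_eq_zero.mp (by linear_combination (Y x).1 * h2 - (Y x).2 * h1)).resolve_right hdet

namespace IsDiracSolution

variable {p1 p2 q : ℝ → ℂ} {s : Set ℝ} {u v w z : ℝ → ℂ}

theorem sub (h : IsDiracSolution p1 p2 q s u v) (h' : IsDiracSolution p1 p2 q s w z) :
    IsDiracSolution p1 p2 q s (fun x => u x - w x) (fun x => v x - z x) := fun x hx =>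
  ⟨((h x hx).1.sub (h' x hx).1).congr_deriv (by ring),
    ((h x hx).2.sub (h' x hx).2).congr_deriv (by ring)⟩

theorem wronskian_eq (h : IsDiracSolution p1 p2 q s u v) (h' : IsDiracSolution p1 p2 q s w z)
    (hs : Convex ℝ s) {x y : ℝ} (hx : x ∈ s) (hy : y ∈ s) :
    u x * z x - v x * w x = u y * z y - v y * w y := by
  refine hs.eq_of_hasDerivWithinAt_zero (φ := fun t => u t * z t - v t * w t) (fun t ht => ?_) hx hy
  exact (((h t ht).2.mul (h' t ht).1).sub ((h t ht).1.mul (h' t ht).2)).congr_deriv (by ring)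

/-- Cramer's rule: `W(Y₁, Y₂) Y = W(Y, Y₂) Y₁ + W(Y₁, Y) Y₂`, with all three Wronskians constant. -/
theorem exists_eq_combination {y11 y12 y21 y22 : ℝ → ℂ}
    (h1 : IsDiracSolution p1 p2 q s y11 y12) (h2 : IsDiracSolution p1 p2 q s y21 y22)
    (h : IsDiracSolution p1 p2 q s u v) (hs : Convex ℝ s) {x0 : ℝ} (hx0 : x0 ∈ s)
    (hW : y11 x0 * y22 x0 - y12 x0 * y21 x0 ≠ 0) :
    ∃ c1 c2 : ℂ, ∀ x ∈ s, u x = c1 * y11 x + c2 * y21 x ∧ v x = c1 * y12 x + c2 * y22 x := by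
  set W := y11 x0 * y22 x0 - y12 x0 * y21 x0
  refine ⟨(u x0 * y22 x0 - v x0 * y21 x0) / W, (y11 x0 * v x0 - y12 x0 * u x0) / W,
    fun x hx => ?_⟩
  have e12 := h1.wronskian_eq h2 hs hx hx0
  have e2 := h.wronskian_eq h2 hs hx hx0
  have e1 := h1.wronskian_eq h hs hx hx0
  constructor <;> field_simp
  · linear_combination (-u x) * e12 + y11 x * e2 + y21 x * e1
  · linear_combination (-v x) * e12 + y12 x * e2 + y22 x * e1

variable {f g : ℝ → ℂ} {a b x0 : ℝ}

theorem hasDerivWithinAt_inv_mul (hfg : IsDiracSolution p1 p2 q s f g) {x : ℝ}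
    (hx : x ∈ s) (hfx : f x ≠ 0) (hgx : g x ≠ 0) :
    HasDerivWithinAt (fun t => (f t * g t)⁻¹) (p1 x / g x ^ 2 - p2 x / f x ^ 2) s x := by
  refine ((hasDerivAt_inv (mul_ne_zero hfx hgx)).comp_hasDerivWithinAt x
    ((hfg x hx).2.mul (hfg x hx).1)).congr_deriv ?_
  field_simp
  ring

theorem continuousOn_fst (hfg : IsDiracSolution p1 p2 q s f g) : ContinuousOn f s :=
  fun x hx => (hfg x hx).2.continuousWithinAt

theorem continuousOn_snd (hfg : IsDiracSolution p1 p2 q s f g) : ContinuousOn g s :=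
  fun x hx => (hfg x hx).1.continuousWithinAt

theorem inv_mul_eq (hfg : IsDiracSolution p1 p2 q (Icc a b) f g)
    (hp1 : ContinuousOn p1 (Icc a b)) (hp2 : ContinuousOn p2 (Icc a b))
    (hf : ∀ x ∈ Icc a b, f x ≠ 0) (hg : ∀ x ∈ Icc a b, g x ≠ 0) (hx0 : x0 ∈ Icc a b)
    {x : ℝ} (hx : x ∈ Icc a b) :
    (f x * g x)⁻¹ =
      (f x0 * g x0)⁻¹ - (∫ s in x0..x, p2 s / f s ^ 2) + ∫ s in x0..x, p1 s / g s ^ 2 := by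
  have hF2 := hasDerivWithinAt_integral_div_sq hp2 hfg.continuousOn_fst hf hx0
  have hF1 := hasDerivWithinAt_integral_div_sq hp1 hfg.continuousOn_snd hg hx0
  have hconst := (convex_Icc a b).eq_of_hasDerivWithinAt_zero
    (φ := fun t => (f t * g t)⁻¹ + (∫ s in x0..t, p2 s / f s ^ 2) - ∫ s in x0..t, p1 s / g s ^ 2)
    (fun t ht => (((hfg.hasDerivWithinAt_inv_mul ht (hf t ht) (hg t ht)).add (hF2 ht)).sub
      (hF1 ht)).congr_deriv (by ring)) hx hx0
  simp only [integral_same] at hconst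
  linear_combination hconst

theorem second_solution (hfg : IsDiracSolution p1 p2 q (Icc a b) f g)
    (hp1 : ContinuousOn p1 (Icc a b)) (hp2 : ContinuousOn p2 (Icc a b))
    (hf : ∀ x ∈ Icc a b, f x ≠ 0) (hg : ∀ x ∈ Icc a b, g x ≠ 0) (hx0 : x0 ∈ Icc a b) :
    IsDiracSolution p1 p2 q (Icc a b)
      (fun x => f x0 * g x0 * f x * ∫ s in x0..x, p2 s / f s ^ 2)
      (fun x => g x * (1 + f x0 * g x0 * ∫ s in x0..x, p1 s / g s ^ 2)) := by
  intro x hx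
  have hid := hfg.inv_mul_eq hp1 hp2 hf hg hx0 hx
  have := hf x hx; have := hg x hx; have := hf x0 hx0; have := hg x0 hx0
  field_simp at hid
  have hF2 := hasDerivWithinAt_integral_div_sq hp2 hfg.continuousOn_fst hf hx0 hx
  have hF1 := hasDerivWithinAt_integral_div_sq hp1 hfg.continuousOn_snd hg hx0 hx
  constructor
  · refine ((hfg x hx).1.mul ((hF1.const_mul _).const_add 1)).congr_deriv ?_
    field_simp
    linear_combination p1 x * hid
  · refine (((hfg x hx).2.const_mul _).mul hF2).congr_deriv ?_
    field_simp
    linear_combination p2 x * hid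

end IsDiracSolution

theorem hom_dirac_general_solution_general (a b x0 : ℝ) (hx0 : x0 ∈ Icc a b)
    (p1 p2 q f g : ℝ → ℂ)
    (hp1 : ContinuousOn p1 (Icc a b)) (hp2 : ContinuousOn p2 (Icc a b))
    (hf : ∀ x ∈ Icc a b, f x ≠ 0) (hg : ∀ x ∈ Icc a b, g x ≠ 0)
    (hsys : ∀ x ∈ Icc a b,
      HasDerivWithinAt g (-(p1 x * f x) - q x * g x) (Icc a b) x ∧
      HasDerivWithinAt f (q x * f x + p2 x * g x) (Icc a b) x)
    (κ : ℂ) (hκ : κ = f x0 * g x0)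
    (y11 y12 y21 y22 : ℝ → ℂ)
    (h11 : y11 = fun x => f x * (1 - κ * ∫ s in x0..x, p2 s / f s ^ 2))
    (h12 : y12 = fun x => -κ * g x * ∫ s in x0..x, p1 s / g s ^ 2)
    (h21 : y21 = fun x => κ * f x * ∫ s in x0..x, p2 s / f s ^ 2)
    (h22 : y22 = fun x => g x * (1 + κ * ∫ s in x0..x, p1 s / g s ^ 2)) :
    (∀ x ∈ Icc a b,
      HasDerivWithinAt y12 (-(p1 x * y11 x) - q x * y12 x) (Icc a b) x ∧
      HasDerivWithinAt y11 (q x * y11 x + p2 x * y12 x) (Icc a b) x ∧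
      HasDerivWithinAt y22 (-(p1 x * y21 x) - q x * y22 x) (Icc a b) x ∧
      HasDerivWithinAt y21 (q x * y21 x + p2 x * y22 x) (Icc a b) x) ∧
    LinearIndependent ℂ
      ![fun x : Icc a b => (y11 x.1, y12 x.1), fun x : Icc a b => (y21 x.1, y22 x.1)] ∧
    (∀ u v : ℝ → ℂ,
      (∀ x ∈ Icc a b,
        HasDerivWithinAt v (-(p1 x * u x) - q x * v x) (Icc a b) x ∧
        HasDerivWithinAt u (q x * u x + p2 x * v x) (Icc a b) x) →
      ∃ c1 c2 : ℂ, ∀ x ∈ Icc a b,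
        u x = c1 * y11 x + c2 * y21 x ∧ v x = c1 * y12 x + c2 * y22 x) := by
  have hfg : IsDiracSolution p1 p2 q (Icc a b) f g := hsys
  have hY2 : IsDiracSolution p1 p2 q (Icc a b) y21 y22 := by
    rw [h21, h22, hκ]
    exact hfg.second_solution hp1 hp2 hf hg hx0
  have hY1 : IsDiracSolution p1 p2 q (Icc a b) y11 y12 := by
    convert hfg.sub hY2 using 2 with x <;> simp only [h11, h12, h21, h22] <;> ring
  have hW : y11 x0 * y22 x0 - y12 x0 * y21 x0 ≠ 0 := by
    simpa [h11, h12, h21, h22, hκ] using mul_ne_zero (hf x0 hx0) (hg x0 hx0)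
  exact ⟨fun x hx => ⟨(hY1 x hx).1, (hY1 x hx).2, (hY2 x hx).1, (hY2 x hx).2⟩,
    linearIndependent_pair_of_det_ne_zero ⟨x0, hx0⟩ hW,
    fun u v huv => hY1.exists_eq_combination hY2 huv (convex_Icc a b) hx0 hW⟩

/-- the two explicitly given vector functions Y₁, Y₂ solve the homogeneous
Dirac system `B Y' + P Y = 0`, are linearly independent, and every solution is a complex
linear combination of them. -/
theorem hom_dirac_general_solution (a b x0 : ℝ) (hx0 : x0 ∈ Icc a b)
    (p1 p2 q f g : ℝ → ℂ)
    (hp1 : ContinuousOn p1 (Icc a b)) (hp2 : ContinuousOn p2 (Icc a b))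
    (hq : ContinuousOn q (Icc a b))
    (hf : ∀ x ∈ Icc a b, f x ≠ 0) (hg : ∀ x ∈ Icc a b, g x ≠ 0)
    (hsys : ∀ x ∈ Icc a b,
      HasDerivWithinAt g (-(p1 x * f x) - q x * g x) (Icc a b) x ∧
      HasDerivWithinAt f (q x * f x + p2 x * g x) (Icc a b) x)
    (κ : ℂ) (hκ : κ = f x0 * g x0)
    (y11 y12 y21 y22 : ℝ → ℂ)
    (h11 : y11 = fun x => f x * (1 - κ * ∫ s in x0..x, p2 s / f s ^ 2))
    (h12 : y12 = fun x => -κ * g x * ∫ s in x0..x, p1 s / g s ^ 2)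
    (h21 : y21 = fun x => κ * f x * ∫ s in x0..x, p2 s / f s ^ 2)
    (h22 : y22 = fun x => g x * (1 + κ * ∫ s in x0..x, p1 s / g s ^ 2)) :
    (∀ x ∈ Icc a b,
      HasDerivWithinAt y12 (-(p1 x * y11 x) - q x * y12 x) (Icc a b) x ∧
      HasDerivWithinAt y11 (q x * y11 x + p2 x * y12 x) (Icc a b) x ∧
      HasDerivWithinAt y22 (-(p1 x * y21 x) - q x * y22 x) (Icc a b) x ∧
      HasDerivWithinAt y21 (q x * y21 x + p2 x * y22 x) (Icc a b) x) ∧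
    LinearIndependent ℂ
      ![fun x : Icc a b => (y11 x.1, y12 x.1), fun x : Icc a b => (y21 x.1, y22 x.1)] ∧
    (∀ u v : ℝ → ℂ,
      (∀ x ∈ Icc a b,
        HasDerivWithinAt v (-(p1 x * u x) - q x * v x) (Icc a b) x ∧
        HasDerivWithinAt u (q x * u x + p2 x * v x) (Icc a b) x) →
      ∃ c1 c2 : ℂ, ∀ x ∈ Icc a b,
        u x = c1 * y11 x + c2 * y21 x ∧ v x = c1 * y12 x + c2 * y22 x) :=
  hom_dirac_general_solution_general a b x0 hx0 p1 p2 q f g hp1 hp2 hf hg hsys κ hκ y11 y12 y21 y22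
    h11 h12 h21 h22
end

section
/- Under the SPPS formal power construction, the simpler bound max{|X^{(n)}(x)|, |Y^{(n)}(x)|, |X̃^{(n)}(x)|, |Ỹ^{(n)}(x)|} ≤ c · 2^n |x-x_0|^n ( c_1 c_2 |x-x_0| + c_3 )^n holds for all n ≥ 0 and x ∈ [a,b]. -/
open Set intervalIntegral MeasureTheory

/-- The SPPS formal powers `(X⁽ⁿ⁾, Y⁽ⁿ⁾)` defined by the recursion
`X⁽ⁿ⁺¹⁾ = (n+1)∫ (-r₂₁ X⁽ⁿ⁾ - r₂₂ (g/f) Y⁽ⁿ⁾ + (p₂/f²) Z⁽ⁿ⁾)`,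
`Y⁽ⁿ⁺¹⁾ = (n+1)∫ (r₁₁ (f/g) X⁽ⁿ⁾ + r₁₂ Y⁽ⁿ⁾ + (p₁/g²) Z⁽ⁿ⁾)`, where
`Z⁽ⁿ⁾ = ∫ (X⁽ⁿ⁾(f²r₁₁+g²r₂₁) + Y⁽ⁿ⁾(f²r₁₂+g²r₂₂))`. -/
noncomputable def spps (p1 p2 r11 r12 r21 r22 f g : ℝ → ℂ) (x0 : ℝ) (X0 Y0 : ℝ → ℂ) :
    ℕ → (ℝ → ℂ) × (ℝ → ℂ)
  | 0 => (X0, Y0)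
  | n + 1 =>
    let X := (spps p1 p2 r11 r12 r21 r22 f g x0 X0 Y0 n).1
    let Y := (spps p1 p2 r11 r12 r21 r22 f g x0 X0 Y0 n).2
    let Z : ℝ → ℂ := fun x => ∫ s in x0..x,
      (X s * (f s ^ 2 * r11 s + g s ^ 2 * r21 s) + Y s * (f s ^ 2 * r12 s + g s ^ 2 * r22 s))
    (fun x => (n + 1 : ℂ) * ∫ s in x0..x,
        (-(r21 s) * X s - r22 s * (g s / f s) * Y s + p2 s / f s ^ 2 * Z s),
     fun x => (n + 1 : ℂ) * ∫ s in x0..x,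
        (r11 s * (f s / g s) * X s + r12 s * Y s + p1 s / g s ^ 2 * Z s))

/-- The SPPS formal power `Z⁽ⁿ⁾`. -/
noncomputable def sppsZ (p1 p2 r11 r12 r21 r22 f g : ℝ → ℂ) (x0 : ℝ) (X0 Y0 : ℝ → ℂ)
    (n : ℕ) : ℝ → ℂ := fun x => ∫ s in x0..x,
      ((spps p1 p2 r11 r12 r21 r22 f g x0 X0 Y0 n).1 s * (f s ^ 2 * r11 s + g s ^ 2 * r21 s)
        + (spps p1 p2 r11 r12 r21 r22 f g x0 X0 Y0 n).2 s * (f s ^ 2 * r12 s + g s ^ 2 * r22 s))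

/-- Initial formal power `X⁽⁰⁾(x) = f(x₀)g(x₀) ∫_{x₀}^x p₂/f²`. -/
noncomputable def sppsX0 (p2 f g : ℝ → ℂ) (x0 : ℝ) : ℝ → ℂ :=
  fun x => f x0 * g x0 * ∫ s in x0..x, p2 s / f s ^ 2

/-- Initial formal power `Y⁽⁰⁾(x) = 1 + f(x₀)g(x₀) ∫_{x₀}^x p₁/g²`. -/
noncomputable def sppsY0 (p1 f g : ℝ → ℂ) (x0 : ℝ) : ℝ → ℂ :=
  fun x => 1 + f x0 * g x0 * ∫ s in x0..x, p1 s / g s ^ 2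

/-- Initial formal power `X̃⁽⁰⁾(x) = 1 - f(x₀)g(x₀) ∫_{x₀}^x p₂/f²`. -/
noncomputable def sppsXt0 (p2 f g : ℝ → ℂ) (x0 : ℝ) : ℝ → ℂ :=
  fun x => 1 - f x0 * g x0 * ∫ s in x0..x, p2 s / f s ^ 2

/-- Initial formal power `Ỹ⁽⁰⁾(x) = -f(x₀)g(x₀) ∫_{x₀}^x p₁/g²`. -/
noncomputable def sppsYt0 (p1 f g : ℝ → ℂ) (x0 : ℝ) : ℝ → ℂ :=
  fun x => -(f x0 * g x0) * ∫ s in x0..x, p1 s / g s ^ 2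

/-- The max-norm (sup norm) of a function on `[a,b]`. -/
noncomputable def supNorm (a b : ℝ) (h : ℝ → ℂ) : ℝ :=
  sSup ((fun x => ‖h x‖) '' Icc a b)

/-!
Induction on `n`. If `‖X⁽ⁿ⁾‖, ‖Y⁽ⁿ⁾‖ ≤ D |t - x₀|ⁿ` between `x₀` and `x`, then
`‖Z⁽ⁿ⁾(s)‖ ≤ 2 c₁ D |x - x₀| |s - x₀|ⁿ` there, so both integrands of the recursion are bounded by
`2 D (c₁ c₂ |x - x₀| + c₃) |s - x₀|ⁿ`. Integrating `|s - x₀|ⁿ` gives `|x - x₀|ⁿ⁺¹ / (n + 1)`, and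
the factor `n + 1` of the recursion cancels the denominator. Since the claimed bound is monotone in
`|x - x₀|`, the choice `D = c 2ⁿ (c₁ c₂ |x - x₀| + c₃)ⁿ` closes the induction. The constants bound
what they should (rather than being junk values of `sSup`) because the coefficients and the zeroth
formal powers are continuous on `[a, b]`.
-/

lemma norm_le_of_supNorm_le {a b C : ℝ} {h : ℝ → ℂ} (hh : ContinuousOn h (Icc a b))
    (hC : supNorm a b h ≤ C) : ∀ x ∈ Icc a b, ‖h x‖ ≤ C := fun _ hx =>
  (le_csSup (isCompact_Icc.bddAbove_image (continuous_norm.comp_continuousOn hh))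
    (mem_image_of_mem _ hx)).trans hC

lemma continuousOn_primitive_Icc {a b x0 : ℝ} {h : ℝ → ℂ} (hab : a ≤ b) (hx0 : x0 ∈ Icc a b)
    (hh : ContinuousOn h (Icc a b)) : ContinuousOn (fun x => ∫ s in x0..x, h s) (Icc a b) := by
  rw [← uIcc_of_le hab] at hx0 hh ⊢
  exact continuousOn_primitive_interval' hh.intervalIntegrable hx0

lemma norm_integral_le_mul_pow_abs_sub {E : Type*} [NormedAddCommGroup E] [NormedSpace ℝ E]
    {G : ℝ → E} {x0 x A : ℝ} {n : ℕ} (hA : 0 ≤ A)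
    (hG : ∀ t ∈ uIoc x0 x, ‖G t‖ ≤ A * |t - x0| ^ n) :
    ‖∫ t in x0..x, G t‖ ≤ A * (|x - x0| ^ (n + 1) / (n + 1)) := by
  have hbound : IntervalIntegrable (fun t => A * |t - x0| ^ n) volume x0 x :=
    Continuous.intervalIntegrable (by fun_prop) _ _
  calc ‖∫ t in x0..x, G t‖ ≤ |∫ t in x0..x, A * |t - x0| ^ n| :=
        norm_integral_le_abs_of_norm_le (ae_restrict_of_forall_mem measurableSet_uIoc hG) hbound
    _ = A * (|x - x0| ^ (n + 1) / (n + 1)) := by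
        rw [intervalIntegral.integral_const_mul, abs_mul, abs_of_nonneg hA, abs_intervalIntegral_eq,
          integral_pow_abs_sub_uIoc, abs_of_nonneg (by positivity)]

lemma norm_natCast_add_one_mul_integral_le {G : ℝ → ℂ} {x0 x A : ℝ} {n : ℕ} (hA : 0 ≤ A)
    (hG : ∀ t ∈ uIoc x0 x, ‖G t‖ ≤ A * |t - x0| ^ n) :
    ‖((n : ℂ) + 1) * ∫ t in x0..x, G t‖ ≤ A * |x - x0| ^ (n + 1) := by
  have hn : ‖((n : ℂ) + 1)‖ = n + 1 := by exact_mod_cast Complex.norm_natCast (n + 1)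
  rw [norm_mul, hn]
  calc ((n : ℝ) + 1) * ‖∫ t in x0..x, G t‖
      ≤ (n + 1) * (A * (|x - x0| ^ (n + 1) / (n + 1))) := by
        gcongr; exact norm_integral_le_mul_pow_abs_sub hA hG
    _ = A * |x - x0| ^ (n + 1) := by field_simp

lemma norm_integral_mul_add_mul_le {I : Set ℝ} {x0 x c1 D : ℝ} {n : ℕ} {w1 w2 X Y : ℝ → ℂ}
    (hI : uIcc x0 x ⊆ I) (hw1 : ∀ s ∈ I, ‖w1 s‖ ≤ c1) (hw2 : ∀ s ∈ I, ‖w2 s‖ ≤ c1) (hD : 0 ≤ D)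
    (hX : ∀ s ∈ uIcc x0 x, ‖X s‖ ≤ D * |s - x0| ^ n)
    (hY : ∀ s ∈ uIcc x0 x, ‖Y s‖ ≤ D * |s - x0| ^ n) {s : ℝ} (hs : s ∈ uIcc x0 x) :
    ‖∫ t in x0..s, (X t * w1 t + Y t * w2 t)‖ ≤ 2 * c1 * D * |x - x0| * |s - x0| ^ n := by
  have hc1 : 0 ≤ c1 := (norm_nonneg _).trans (hw1 x0 (hI left_mem_uIcc))
  have hsub : uIcc x0 s ⊆ uIcc x0 x := uIcc_subset_uIcc left_mem_uIcc hs
  have hint : ∀ t ∈ uIoc x0 s, ‖X t * w1 t + Y t * w2 t‖ ≤ 2 * c1 * D * |t - x0| ^ n := by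
    intro t ht
    have ht' := hsub (uIoc_subset_uIcc ht)
    calc ‖X t * w1 t + Y t * w2 t‖ ≤ ‖X t‖ * ‖w1 t‖ + ‖Y t‖ * ‖w2 t‖ :=
          norm_add_le_of_le (norm_mul_le _ _) (norm_mul_le _ _)
      _ ≤ D * |t - x0| ^ n * c1 + D * |t - x0| ^ n * c1 := by
          gcongr
          exacts [hX t ht', hw1 t (hI ht'), hY t ht', hw2 t (hI ht')]
      _ = 2 * c1 * D * |t - x0| ^ n := by ring
  calc _ ≤ 2 * c1 * D * (|s - x0| ^ (n + 1) / (n + 1)) :=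
        norm_integral_le_mul_pow_abs_sub (by positivity) hint
    _ ≤ 2 * c1 * D * |s - x0| ^ (n + 1) := by
        gcongr; exact div_le_self (by positivity) (by linarith)
    _ ≤ 2 * c1 * D * |x - x0| * |s - x0| ^ n := by
        rw [pow_succ, mul_comm _ |s - x0|, ← mul_assoc]
        gcongr 2 * c1 * D * ?_ * _; exact abs_sub_left_of_mem_uIcc hs

lemma norm_spps_step_le {I : Set ℝ} {x0 x c1 c2 c3 D : ℝ} {n : ℕ} {A B C w1 w2 X Y : ℝ → ℂ}
    (hI : uIcc x0 x ⊆ I) (hA : ∀ s ∈ I, ‖A s‖ ≤ c3) (hB : ∀ s ∈ I, ‖B s‖ ≤ c3)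
    (hC : ∀ s ∈ I, ‖C s‖ ≤ c2) (hw1 : ∀ s ∈ I, ‖w1 s‖ ≤ c1) (hw2 : ∀ s ∈ I, ‖w2 s‖ ≤ c1)
    (hD : 0 ≤ D)
    (hX : ∀ s ∈ uIcc x0 x, ‖X s‖ ≤ D * |s - x0| ^ n)
    (hY : ∀ s ∈ uIcc x0 x, ‖Y s‖ ≤ D * |s - x0| ^ n) :
    ‖((n : ℂ) + 1) * ∫ s in x0..x,
        (A s * X s + B s * Y s + C s * ∫ t in x0..s, (X t * w1 t + Y t * w2 t))‖
      ≤ 2 * D * (c1 * c2 * |x - x0| + c3) * |x - x0| ^ (n + 1) := by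
  have hc1 : 0 ≤ c1 := (norm_nonneg _).trans (hw1 x0 (hI left_mem_uIcc))
  have hc2 : 0 ≤ c2 := (norm_nonneg _).trans (hC x0 (hI left_mem_uIcc))
  have hc3 : 0 ≤ c3 := (norm_nonneg _).trans (hA x0 (hI left_mem_uIcc))
  apply norm_natCast_add_one_mul_integral_le (by positivity)
  intro s hs
  have hs' := uIoc_subset_uIcc hs
  calc _ ≤ ‖A s‖ * ‖X s‖ + ‖B s‖ * ‖Y s‖
        + ‖C s‖ * ‖∫ t in x0..s, (X t * w1 t + Y t * w2 t)‖ :=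
        norm_add₃_le.trans (by gcongr <;> exact norm_mul_le _ _)
    _ ≤ c3 * (D * |s - x0| ^ n) + c3 * (D * |s - x0| ^ n)
        + c2 * (2 * c1 * D * |x - x0| * |s - x0| ^ n) := by
        gcongr
        exacts [hA s (hI hs'), hX s hs', hB s (hI hs'), hY s hs', hC s (hI hs'),
          norm_integral_mul_add_mul_le hI hw1 hw2 hD hX hY hs']
    _ = _ := by ring

theorem norm_spps_le {a b x0 c c1 c2 c3 : ℝ} {p1 p2 r11 r12 r21 r22 f g X0 Y0 : ℝ → ℂ}
    (hx0 : x0 ∈ Icc a b)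
    (hw1 : ∀ t ∈ Icc a b, ‖f t ^ 2 * r11 t + g t ^ 2 * r21 t‖ ≤ c1)
    (hw2 : ∀ t ∈ Icc a b, ‖f t ^ 2 * r12 t + g t ^ 2 * r22 t‖ ≤ c1)
    (hp1 : ∀ t ∈ Icc a b, ‖p1 t / g t ^ 2‖ ≤ c2) (hp2 : ∀ t ∈ Icc a b, ‖p2 t / f t ^ 2‖ ≤ c2)
    (hr11 : ∀ t ∈ Icc a b, ‖r11 t * f t / g t‖ ≤ c3) (hr12 : ∀ t ∈ Icc a b, ‖r12 t‖ ≤ c3)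
    (hr21 : ∀ t ∈ Icc a b, ‖r21 t‖ ≤ c3) (hr22 : ∀ t ∈ Icc a b, ‖r22 t * g t / f t‖ ≤ c3)
    (hX0 : ∀ t ∈ Icc a b, ‖X0 t‖ ≤ c) (hY0 : ∀ t ∈ Icc a b, ‖Y0 t‖ ≤ c) (n : ℕ) :
    ∀ x ∈ Icc a b,
      max ‖(spps p1 p2 r11 r12 r21 r22 f g x0 X0 Y0 n).1 x‖
          ‖(spps p1 p2 r11 r12 r21 r22 f g x0 X0 Y0 n).2 x‖
        ≤ c * 2 ^ n * |x - x0| ^ n * (c1 * c2 * |x - x0| + c3) ^ n := by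
  induction n with
  | zero => intro x hx; simpa [spps] using max_le (hX0 x hx) (hY0 x hx)
  | succ n ih =>
    intro x hx
    set X := (spps p1 p2 r11 r12 r21 r22 f g x0 X0 Y0 n).1
    set Y := (spps p1 p2 r11 r12 r21 r22 f g x0 X0 Y0 n).2
    have hsub : uIcc x0 x ⊆ Icc a b := uIcc_subset_Icc hx0 hx
    have hc : 0 ≤ c := (norm_nonneg _).trans (hX0 x0 hx0)
    have hc1 : 0 ≤ c1 := (norm_nonneg _).trans (hw1 x0 hx0)
    have hc2 : 0 ≤ c2 := (norm_nonneg _).trans (hp1 x0 hx0)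
    have hc3 : 0 ≤ c3 := (norm_nonneg _).trans (hr12 x0 hx0)
    set K := c1 * c2 * |x - x0| + c3 with hK
    have hD : 0 ≤ c * 2 ^ n * K ^ n := by positivity
    set D := c * 2 ^ n * K ^ n
    have hXY : ∀ s ∈ uIcc x0 x, max ‖X s‖ ‖Y s‖ ≤ D * |s - x0| ^ n := by
      intro s hs
      calc _ ≤ c * 2 ^ n * |s - x0| ^ n * (c1 * c2 * |s - x0| + c3) ^ n := ih s (hsub hs)
        _ ≤ c * 2 ^ n * |s - x0| ^ n * K ^ n := by
            rw [hK]
            gcongr c * 2 ^ n * |s - x0| ^ n * (c1 * c2 * ?_ + c3) ^ n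
            exact abs_sub_left_of_mem_uIcc hs
        _ = D * |s - x0| ^ n := by ring
    have hX : ∀ s ∈ uIcc x0 x, ‖X s‖ ≤ D * |s - x0| ^ n :=
      fun s hs => (le_max_left _ _).trans (hXY s hs)
    have hY : ∀ s ∈ uIcc x0 x, ‖Y s‖ ≤ D * |s - x0| ^ n :=
      fun s hs => (le_max_right _ _).trans (hXY s hs)
    have hbound : 2 * D * K * |x - x0| ^ (n + 1)
        = c * 2 ^ (n + 1) * |x - x0| ^ (n + 1) * K ^ (n + 1) := by ring
    rw [← hbound]
    refine max_le ?_ ?_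
    · refine Eq.trans_le ?_ (norm_spps_step_le (A := fun s => -r21 s)
        (B := fun s => -(r22 s * g s / f s)) hsub
        (fun s hs => (norm_neg _).trans_le (hr21 s hs))
        (fun s hs => (norm_neg _).trans_le (hr22 s hs)) hp2 hw1 hw2 hD hX hY)
      exact congrArg (‖((n : ℂ) + 1) * ·‖) (integral_congr fun s _ => by ring)
    · refine Eq.trans_le ?_
        (norm_spps_step_le (A := fun s => r11 s * f s / g s) hsub hr11 hr12 hp1 hw1 hw2 hD hX hY)
      exact congrArg (‖((n : ℂ) + 1) * ·‖) (integral_congr fun s _ => by ring)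

theorem spps_formal_power_simple_estimate_general (a b x0 : ℝ) (hab : a ≤ b) (hx0 : x0 ∈ Icc a b)
    (p1 p2 q r11 r12 r21 r22 f g : ℝ → ℂ)
    (hp1 : ContinuousOn p1 (Icc a b)) (hp2 : ContinuousOn p2 (Icc a b))
    (hr11 : ContinuousOn r11 (Icc a b)) (hr12 : ContinuousOn r12 (Icc a b))
    (hr21 : ContinuousOn r21 (Icc a b)) (hr22 : ContinuousOn r22 (Icc a b))
    (hf : ∀ x ∈ Icc a b, f x ≠ 0) (hg : ∀ x ∈ Icc a b, g x ≠ 0)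
    (hsys : ∀ x ∈ Icc a b,
      HasDerivWithinAt g (-(p1 x * f x) - q x * g x) (Icc a b) x ∧
      HasDerivWithinAt f (q x * f x + p2 x * g x) (Icc a b) x)
    (S St : ℕ → (ℝ → ℂ) × (ℝ → ℂ))
    (hS : S = spps p1 p2 r11 r12 r21 r22 f g x0 (sppsX0 p2 f g x0) (sppsY0 p1 f g x0))
    (hSt : St = spps p1 p2 r11 r12 r21 r22 f g x0 (sppsXt0 p2 f g x0) (sppsYt0 p1 f g x0))
    (c c1 c2 c3 : ℝ)
    (hc : c = max (max (supNorm a b (sppsX0 p2 f g x0)) (supNorm a b (sppsY0 p1 f g x0)))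
      (max (supNorm a b (sppsXt0 p2 f g x0)) (supNorm a b (sppsYt0 p1 f g x0))))
    (hc1 : c1 = max (supNorm a b (fun x => f x ^ 2 * r11 x + g x ^ 2 * r21 x))
      (supNorm a b (fun x => f x ^ 2 * r12 x + g x ^ 2 * r22 x)))
    (hc2 : c2 = max (supNorm a b (fun x => p1 x / g x ^ 2))
      (supNorm a b (fun x => p2 x / f x ^ 2)))
    (hc3 : c3 = max (max (supNorm a b (fun x => r11 x * f x / g x)) (supNorm a b r12))
      (max (supNorm a b r21) (supNorm a b (fun x => r22 x * g x / f x)))) :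
    ∀ n : ℕ, ∀ x ∈ Icc a b,
      max (max ‖(S n).1 x‖ ‖(S n).2 x‖)
          (max ‖(St n).1 x‖ ‖(St n).2 x‖)
        ≤ c * 2 ^ n * |x - x0| ^ n * (c1 * c2 * |x - x0| + c3) ^ n := by
  subst hS hSt
  have hfc : ContinuousOn f (Icc a b) := fun x hx => (hsys x hx).2.continuousWithinAt
  have hgc : ContinuousOn g (Icc a b) := fun x hx => (hsys x hx).1.continuousWithinAt
  have hp1g : ContinuousOn (fun x => p1 x / g x ^ 2) (Icc a b) :=
    hp1.div (hgc.pow 2) fun x hx => pow_ne_zero 2 (hg x hx)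
  have hp2f : ContinuousOn (fun x => p2 x / f x ^ 2) (Icc a b) :=
    hp2.div (hfc.pow 2) fun x hx => pow_ne_zero 2 (hf x hx)
  have hI1 := continuousOn_primitive_Icc hab hx0 hp1g
  have hI2 := continuousOn_primitive_Icc hab hx0 hp2f
  have hw1 := norm_le_of_supNorm_le (((hfc.pow 2).mul hr11).add ((hgc.pow 2).mul hr21))
    (hc1 ▸ le_max_left _ _)
  have hw2 := norm_le_of_supNorm_le (((hfc.pow 2).mul hr12).add ((hgc.pow 2).mul hr22))
    (hc1 ▸ le_max_right _ _)
  have hpg := norm_le_of_supNorm_le hp1g (hc2 ▸ le_max_left _ _)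
  have hpf := norm_le_of_supNorm_le hp2f (hc2 ▸ le_max_right _ _)
  have hrfg := norm_le_of_supNorm_le ((hr11.mul hfc).div hgc hg)
    (hc3 ▸ le_max_of_le_left (le_max_left _ _))
  have hr12' := norm_le_of_supNorm_le hr12 (hc3 ▸ le_max_of_le_left (le_max_right _ _))
  have hr21' := norm_le_of_supNorm_le hr21 (hc3 ▸ le_max_of_le_right (le_max_left _ _))
  have hrgf := norm_le_of_supNorm_le ((hr22.mul hgc).div hfc hf)
    (hc3 ▸ le_max_of_le_right (le_max_right _ _))
  intro n x hx
  exact max_le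
    (norm_spps_le hx0 hw1 hw2 hpg hpf hrfg hr12' hr21' hrgf
      (norm_le_of_supNorm_le (continuousOn_const.mul hI2)
        (hc ▸ le_max_of_le_left (le_max_left _ _)))
      (norm_le_of_supNorm_le (continuousOn_const.add (continuousOn_const.mul hI1))
        (hc ▸ le_max_of_le_left (le_max_right _ _))) n x hx)
    (norm_spps_le hx0 hw1 hw2 hpg hpf hrfg hr12' hr21' hrgf
      (norm_le_of_supNorm_le (continuousOn_const.sub (continuousOn_const.mul hI2))
        (hc ▸ le_max_of_le_right (le_max_left _ _)))
      (norm_le_of_supNorm_le (continuousOn_const.mul hI1)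
        (hc ▸ le_max_of_le_right (le_max_right _ _))) n x hx)

/-- the simpler estimate for the formal powers X⁽ⁿ⁾, Y⁽ⁿ⁾, X̃⁽ⁿ⁾, Ỹ⁽ⁿ⁾. -/
theorem spps_formal_power_simple_estimate (a b x0 : ℝ) (hab : a ≤ b) (hx0 : x0 ∈ Icc a b)
    (p1 p2 q r11 r12 r21 r22 f g : ℝ → ℂ)
    (hp1 : ContinuousOn p1 (Icc a b)) (hp2 : ContinuousOn p2 (Icc a b))
    (hq : ContinuousOn q (Icc a b))
    (hr11 : ContinuousOn r11 (Icc a b)) (hr12 : ContinuousOn r12 (Icc a b))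
    (hr21 : ContinuousOn r21 (Icc a b)) (hr22 : ContinuousOn r22 (Icc a b))
    (hf : ∀ x ∈ Icc a b, f x ≠ 0) (hg : ∀ x ∈ Icc a b, g x ≠ 0)
    (hsys : ∀ x ∈ Icc a b,
      HasDerivWithinAt g (-(p1 x * f x) - q x * g x) (Icc a b) x ∧
      HasDerivWithinAt f (q x * f x + p2 x * g x) (Icc a b) x)
    (S St : ℕ → (ℝ → ℂ) × (ℝ → ℂ))
    (hS : S = spps p1 p2 r11 r12 r21 r22 f g x0 (sppsX0 p2 f g x0) (sppsY0 p1 f g x0))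
    (hSt : St = spps p1 p2 r11 r12 r21 r22 f g x0 (sppsXt0 p2 f g x0) (sppsYt0 p1 f g x0))
    (c c1 c2 c3 : ℝ)
    (hc : c = max (max (supNorm a b (sppsX0 p2 f g x0)) (supNorm a b (sppsY0 p1 f g x0)))
      (max (supNorm a b (sppsXt0 p2 f g x0)) (supNorm a b (sppsYt0 p1 f g x0))))
    (hc1 : c1 = max (supNorm a b (fun x => f x ^ 2 * r11 x + g x ^ 2 * r21 x))
      (supNorm a b (fun x => f x ^ 2 * r12 x + g x ^ 2 * r22 x)))
    (hc2 : c2 = max (supNorm a b (fun x => p1 x / g x ^ 2))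
      (supNorm a b (fun x => p2 x / f x ^ 2)))
    (hc3 : c3 = max (max (supNorm a b (fun x => r11 x * f x / g x)) (supNorm a b r12))
      (max (supNorm a b r21) (supNorm a b (fun x => r22 x * g x / f x)))) :
    ∀ n : ℕ, ∀ x ∈ Icc a b,
      max (max ‖(S n).1 x‖ ‖(S n).2 x‖)
          (max ‖(St n).1 x‖ ‖(St n).2 x‖)
        ≤ c * 2 ^ n * |x - x0| ^ n * (c1 * c2 * |x - x0| + c3) ^ n :=
  spps_formal_power_simple_estimate_general a b x0 hab hx0 p1 p2 q r11 r12 r21 r22 f g hp1 hp2 hr11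
    hr12 hr21 hr22 hf hg hsys S St hS hSt c c1 c2 c3 hc hc1 hc2 hc3
end
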